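/- arXiv:2308.11575 — 2 statements merged into one kernel-verified Lean document; each statement's English description precedes it below -/
import Mathlib

section
/- The product formula holds: for all z, w ∈ ℂ, 3 s_0(z) s_0(w) = s_0(z + w) + s_0(z + ζ_2 w) + s_0(z + ζ_3 w), where ζ_2 and ζ_3 are the primitive cube roots of unity. -/
open Complex

noncomputable def ζ2 : ℂ := (-1 + Complex.I * Real.sqrt 3) / 2
noncomputable def ζ3 : ℂ := (-1 - Complex.I * Real.sqrt 3) / 2

/-- `s p z = (1/3) ∑_{k=1}^{3} ζ_k^{-p} e^{z ζ_k}` with `ζ_1 = 1`. -/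
noncomputable def s (p : ℕ) (z : ℂ) : ℂ :=
  (Complex.exp z + Complex.exp (z * ζ2) / ζ2 ^ p + Complex.exp (z * ζ3) / ζ3 ^ p) / 3

/-!
Write `S(z) = ∑ₖ exp (ωᵏ z)` for an `n`-th root of unity `ω`. Expanding `S(z) S(w)` gives
`∑ⱼ ∑ₖ exp (ωʲ z + ωᵏ w)`; substituting `k = j + m` (mod `n`) turns the inner sum over `k` into
`∑ₘ exp (ωʲ (z + ωᵐ w))`, so `S(z) S(w) = ∑ₘ S(z + ωᵐ w)`. With `n = 3`, `ω = ζ₂` and `ζ₂² = ζ₃`,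
`S = 3 s₀`.
-/

theorem pow_val_add_of_pow_eq_one {M : Type*} [Monoid M] {ω : M} {n : ℕ} [NeZero n]
    (hω : ω ^ n = 1) (j k : Fin n) : ω ^ ((j + k : Fin n) : ℕ) = ω ^ (j : ℕ) * ω ^ (k : ℕ) := by
  rw [Fin.val_add, ← pow_eq_pow_mod _ hω, pow_add]

theorem sum_exp_pow_mul_sum_exp_pow {ω : ℂ} {n : ℕ} [NeZero n] (hω : ω ^ n = 1) (z w : ℂ) :
    (∑ j : Fin n, exp (ω ^ (j : ℕ) * z)) * ∑ k : Fin n, exp (ω ^ (k : ℕ) * w) =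
      ∑ m : Fin n, ∑ j : Fin n, exp (ω ^ (j : ℕ) * (z + ω ^ (m : ℕ) * w)) := by
  rw [Finset.sum_mul_sum]
  conv_rhs => rw [Finset.sum_comm]
  refine Finset.sum_congr rfl fun j _ => ?_
  refine (Fintype.sum_equiv (Equiv.addLeft j) _ _ fun m => ?_).symm
  rw [Equiv.coe_addLeft, pow_val_add_of_pow_eq_one hω, ← exp_add]
  congr 1
  ring

theorem ofReal_sqrt_three_sq : ((Real.sqrt 3 : ℝ) : ℂ) ^ 2 = 3 := by
  exact_mod_cast Real.sq_sqrt (by norm_num)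

theorem ζ2_sq : ζ2 ^ 2 = ζ3 := by
  unfold ζ2 ζ3
  linear_combination (I ^ 2 / 4) * ofReal_sqrt_three_sq + (3 / 4) * I_sq

theorem ζ2_mul_ζ3 : ζ2 * ζ3 = 1 := by
  unfold ζ2 ζ3
  linear_combination (-I ^ 2 / 4) * ofReal_sqrt_three_sq - (3 / 4) * I_sq

theorem ζ2_pow_three : ζ2 ^ 3 = 1 := by
  rw [pow_succ', ζ2_sq, ζ2_mul_ζ3]

theorem three_mul_s_zero (z : ℂ) : 3 * s 0 z = ∑ j : Fin 3, exp (ζ2 ^ (j : ℕ) * z) := by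
  simp only [s, Fin.sum_univ_three, Fin.val_zero, Fin.val_one, Fin.val_two, pow_zero, pow_one,
    div_one, one_mul, ζ2_sq]
  ring_nf

theorem s_product (z w : ℂ) :
    3 * s 0 z * s 0 w = s 0 (z + w) + s 0 (z + ζ2 * w) + s 0 (z + ζ3 * w) := by
  have h := sum_exp_pow_mul_sum_exp_pow ζ2_pow_three z w
  simp_rw [← three_mul_s_zero] at h
  simp only [Fin.sum_univ_three, Fin.val_zero, Fin.val_one, Fin.val_two,
    pow_zero, pow_one, one_mul, ζ2_sq] at h
  linear_combination h / 3
end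

section
/- The duplication formulas hold for all z ∈ ℂ: 3 s_0(z)^2 = s_0(2z) + 2 s_0(−z); 3 s_1(z)^2 = s_2(2z) + 2 s_2(−z); 3 s_2(z)^2 = s_1(2z) + 2 s_1(−z). -/
open Complex

/-! With `a = e^z`, `b = e^{zζ₂}`, `c = e^{zζ₃}`, the relation `1 + ζ₂ + ζ₃ = 0` gives
`e^{-z} = bc`, `e^{-zζ₂} = ac`, `e^{-zζ₃} = ab`, and `ζ₂⁻¹ = ζ₃`, `ζ₂² = ζ₃`, `ζ₃² = ζ₂`.
So `3 s_p(z)`, `3 s_p(2z)` and `3 s_p(-z)` are the same linear form, with coefficients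
`1, ζ₃^p, ζ₂^p`, evaluated at `(a, b, c)`, `(a², b², c²)` and `(bc, ac, ab)`; squaring the first
and reducing with `ζ₂ζ₃ = 1` gives the other two with `p` replaced by `2p`. Since `ζ₂³ = ζ₃³ = 1`,
`s_{p+3} = s_p`, so `s_4 = s_1`. -/

theorem sq_add_mul_pow_add_mul_pow {R : Type*} [CommRing R] {ω ω' : R} (hmul : ω * ω' = 1)
    (hsq : ω ^ 2 = ω') (hsq' : ω' ^ 2 = ω) (p : ℕ) (a b c : R) :
    (a + b * ω' ^ p + c * ω ^ p) ^ 2 =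
      (a ^ 2 + b ^ 2 * ω' ^ (2 * p) + c ^ 2 * ω ^ (2 * p)) +
        2 * (b * c + a * c * ω' ^ (2 * p) + a * b * ω ^ (2 * p)) := by
  have hp : ω ^ p * ω' ^ p = 1 := by rw [← mul_pow, hmul, one_pow]
  have h2p : ω ^ (2 * p) = ω' ^ p := by rw [pow_mul, hsq]
  have h2p' : ω' ^ (2 * p) = ω ^ p := by rw [pow_mul, hsq']
  linear_combination (2 * b * c) * hp - (2 * a * c) * h2p' - (2 * a * b) * h2p

theorem sqrt_three_sq : (Real.sqrt 3 : ℂ) ^ 2 = 3 := by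
  rw [← Complex.ofReal_pow, Real.sq_sqrt (by norm_num)]
  norm_num

theorem ζ2_add_ζ3 : ζ2 + ζ3 = -1 := by
  unfold ζ2 ζ3
  ring

theorem ζ3_sq : ζ3 ^ 2 = ζ2 := by
  linear_combination ζ3 * ζ2_add_ζ3 - ζ2_mul_ζ3 - ζ2_add_ζ3

theorem ζ3_pow_three : ζ3 ^ 3 = 1 := by
  rw [pow_succ, ζ3_sq, ζ2_mul_ζ3]

theorem s_eq (p : ℕ) (z : ℂ) :
    s p z = (exp z + exp (z * ζ2) * ζ3 ^ p + exp (z * ζ3) * ζ2 ^ p) / 3 := by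
  have h2 : ζ2⁻¹ = ζ3 := inv_eq_of_mul_eq_one_right ζ2_mul_ζ3
  have h3 : ζ3⁻¹ = ζ2 := inv_eq_of_mul_eq_one_left ζ2_mul_ζ3
  simp only [s, div_eq_mul_inv (exp _), ← inv_pow, h2, h3]

theorem s_two_mul (p : ℕ) (z : ℂ) :
    s p (2 * z) =
      (exp z ^ 2 + exp (z * ζ2) ^ 2 * ζ3 ^ p + exp (z * ζ3) ^ 2 * ζ2 ^ p) / 3 := by
  simp only [s_eq, ← exp_nat_mul, Nat.cast_ofNat, mul_assoc]

theorem exp_neg_mul_eq {u v w : ℂ} (h : u + v + w = 0) (z : ℂ) :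
    exp (-z * u) = exp (z * v) * exp (z * w) := by
  rw [← exp_add]
  congr 1
  linear_combination (-z) * h

theorem s_neg (p : ℕ) (z : ℂ) :
    s p (-z) = (exp (z * ζ2) * exp (z * ζ3) + exp z * exp (z * ζ3) * ζ3 ^ p +
      exp z * exp (z * ζ2) * ζ2 ^ p) / 3 := by
  have h : 1 + ζ2 + ζ3 = 0 := by linear_combination ζ2_add_ζ3
  rw [s_eq, exp_neg_mul_eq (by linear_combination h : ζ2 + 1 + ζ3 = 0),
    exp_neg_mul_eq (by linear_combination h : ζ3 + 1 + ζ2 = 0), ← mul_one (-z),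
    exp_neg_mul_eq h, mul_one]

theorem s_add_three (p : ℕ) (z : ℂ) : s (p + 3) z = s p z := by
  simp only [s_eq, pow_add, ζ2_pow_three, ζ3_pow_three, mul_one]

theorem three_mul_s_sq (p : ℕ) (z : ℂ) :
    3 * s p z ^ 2 = s (2 * p) (2 * z) + 2 * s (2 * p) (-z) := by
  rw [s_eq, s_two_mul, s_neg]
  linear_combination (1 / 3 : ℂ) *
    sq_add_mul_pow_add_mul_pow ζ2_mul_ζ3 ζ2_sq ζ3_sq p (exp z) (exp (z * ζ2)) (exp (z * ζ3))

theorem s_duplication (z : ℂ) :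
    3 * s 0 z ^ 2 = s 0 (2 * z) + 2 * s 0 (-z) ∧
    3 * s 1 z ^ 2 = s 2 (2 * z) + 2 * s 2 (-z) ∧
    3 * s 2 z ^ 2 = s 1 (2 * z) + 2 * s 1 (-z) := by
  refine ⟨three_mul_s_sq 0 z, three_mul_s_sq 1 z, ?_⟩
  simpa only [s_add_three] using three_mul_s_sq 2 z
end
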